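/- arXiv:2101.01968 — 6 statements merged into one kernel-verified Lean document; each statement's English description precedes it below -/
import Mathlib

section
/- For all words u, v over a finite ordered alphabet A and all n ∈ ℕ: u ⪯_n v if and only if for every FO+ formula φ of quantifier rank at most n, u ⊨ φ implies v ⊨ φ. -/
/-- Syntax of positive first-order logic on words. -/
inductive FOp (A : Type) where
  | atom (a : A) (x : ℕ)
  | le (x y : ℕ)
  | lt (x y : ℕ)
  | and (φ ψ : FOp A)
  | or (φ ψ : FOp A)
  | ex (x : ℕ) (φ : FOp A)
  | all (x : ℕ) (φ : FOp A)

/-- Semantics of `FOp` formulas on words. -/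
def FOp.Sat {A : Type} [PartialOrder A] (u : List A) (α : ℕ → ℕ) : FOp A → Prop
  | atom a x => ∃ b, u[α x]? = some b ∧ a ≤ b
  | le x y => α x ≤ α y
  | lt x y => α x < α y
  | and φ ψ => FOp.Sat u α φ ∧ FOp.Sat u α ψ
  | or φ ψ => FOp.Sat u α φ ∨ FOp.Sat u α ψ
  | ex x φ => ∃ i, i < u.length ∧ FOp.Sat u (Function.update α x i) φ
  | all x φ => ∀ i, i < u.length → FOp.Sat u (Function.update α x i) φ

/-- Quantifier rank. -/
def FOp.qr {A : Type} : FOp A → ℕ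
  | atom _ _ => 0
  | le _ _ => 0
  | lt _ _ => 0
  | and φ ψ => max φ.qr ψ.qr
  | or φ ψ => max φ.qr ψ.qr
  | ex _ φ => φ.qr + 1
  | all _ φ => φ.qr + 1

/-- Free variables. -/
def FOp.fv {A : Type} : FOp A → Finset ℕ
  | atom _ x => {x}
  | le x y => {x, y}
  | lt x y => {x, y}
  | and φ ψ => φ.fv ∪ ψ.fv
  | or φ ψ => φ.fv ∪ ψ.fv
  | ex x φ => φ.fv.erase x
  | all x φ => φ.fv.erase x

/-- A language is FO⁺-definable if it is the set of words satisfying some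
FO⁺ sentence. -/
def FOpDefinable {A : Type} [PartialOrder A] (L : Set (List A)) : Prop :=
  ∃ φ : FOp A, φ.fv = ∅ ∧ L = {u | FOp.Sat u (fun _ => 0) φ}
/-- A position of the EF⁺-game on `(u, v)` given by the list `ts` of pairs of
token positions is valid if corresponding labels satisfy `u[i] ≤ v[j]` and the
orderings of token positions agree. -/
def ValidPos {A : Type} [PartialOrder A] (u v : List A) (ts : List (ℕ × ℕ)) : Prop :=
  (∀ p ∈ ts, ∃ a b, u[p.1]? = some a ∧ v[p.2]? = some b ∧ a ≤ b) ∧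
  (∀ p ∈ ts, ∀ q ∈ ts, (p.1 ≤ q.1 ↔ p.2 ≤ q.2))

/-- Duplicator has a winning strategy in the `n` remaining rounds of the
EF⁺-game on `(u, v)` from the position `ts`. -/
def DWin {A : Type} [PartialOrder A] (u v : List A) : ℕ → List (ℕ × ℕ) → Prop
  | 0, ts => ValidPos u v ts
  | n + 1, ts => ValidPos u v ts ∧
      (∀ i, i < u.length → ∃ j, j < v.length ∧ DWin u v n ((i, j) :: ts)) ∧
      (∀ j, j < v.length → ∃ i, i < u.length ∧ DWin u v n ((i, j) :: ts))

/-- `u ⪯ₙ v` : Duplicator has a winning strategy in the `n`-round EF⁺-game. -/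
def EFpre {A : Type} [PartialOrder A] (n : ℕ) (u v : List A) : Prop :=
  DWin u v n []


/-!
Soundness of the game is an induction on `φ`: a quantifier of `φ` is answered by one round of
Duplicator's strategy, and as long as every free variable of `φ` sits on a pair of matched tokens,
atomic formulas transfer from `u` to `v` by validity of the position.

Completeness is the contrapositive, by induction on the number of rounds: if Spoiler wins, some
formula of the corresponding rank holds in `u` and fails in `v`. With no round left, a violated
label or order constraint of the position is such an atomic formula. If Spoiler's winning move
is `i` in `u`, every answer `j` in `v` loses, say against `φⱼ`, and `∃ x, ⋀ⱼ φⱼ` separates;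
dually, a move in `v` yields `∀ x, ⋁ᵢ φᵢ`. The variable bound in round `k` is `k`, so the
position after `k` rounds is determined by two assignments of the variables `0, …, k-1`.
-/

namespace FOp

variable {A : Type}

/- The empty conjunction (disjunction) is `x ≤ x` (`x < x`) rather than a sentence, so that its
rank is `0`; `x` will be the variable bound just outside. -/
def listAnd (x : ℕ) (l : List (FOp A)) : FOp A := l.foldr .and (.le x x)

def listOr (x : ℕ) (l : List (FOp A)) : FOp A := l.foldr .or (.lt x x)

theorem sat_listAnd [PartialOrder A] {u : List A} {α : ℕ → ℕ} {x : ℕ} {l : List (FOp A)} :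
    (listAnd x l).Sat u α ↔ ∀ φ ∈ l, φ.Sat u α := by
  induction l <;> simp_all [listAnd, Sat]

theorem sat_listOr [PartialOrder A] {u : List A} {α : ℕ → ℕ} {x : ℕ} {l : List (FOp A)} :
    (listOr x l).Sat u α ↔ ∃ φ ∈ l, φ.Sat u α := by
  induction l <;> simp_all [listOr, Sat]

theorem qr_listAnd_le {x m : ℕ} {l : List (FOp A)} (h : ∀ φ ∈ l, φ.qr ≤ m) :
    (listAnd x l).qr ≤ m := by
  induction l <;> simp_all [listAnd, qr]

theorem qr_listOr_le {x m : ℕ} {l : List (FOp A)} (h : ∀ φ ∈ l, φ.qr ≤ m) :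
    (listOr x l).qr ≤ m := by
  induction l <;> simp_all [listOr, qr]

theorem fv_listAnd_subset {x : ℕ} {s : Finset ℕ} {l : List (FOp A)} (hx : x ∈ s)
    (h : ∀ φ ∈ l, φ.fv ⊆ s) : (listAnd x l).fv ⊆ s := by
  induction l <;> simp_all [listAnd, fv, Finset.union_subset_iff]

theorem fv_listOr_subset {x : ℕ} {s : Finset ℕ} {l : List (FOp A)} (hx : x ∈ s)
    (h : ∀ φ ∈ l, φ.fv ⊆ s) : (listOr x l).fv ⊆ s := by
  induction l <;> simp_all [listOr, fv, Finset.union_subset_iff]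

end FOp

section Game

variable {A : Type} [PartialOrder A] {u v : List A}

theorem DWin.validPos : ∀ {n : ℕ} {ts : List (ℕ × ℕ)}, DWin u v n ts → ValidPos u v ts
  | 0, _, h => h
  | _ + 1, _, h => h.1

theorem mem_cons_update_of_forall_mem_erase {ts : List (ℕ × ℕ)} {α β : ℕ → ℕ} {s : Finset ℕ}
    {x i j : ℕ} (h : ∀ y ∈ s.erase x, (α y, β y) ∈ ts) :
    ∀ y ∈ s, (Function.update α x i y, Function.update β x j y) ∈ (i, j) :: ts := by
  intro y hy
  by_cases hyx : y = x
  · simp [hyx]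
  · simp only [Function.update_of_ne hyx]
    exact List.mem_cons_of_mem _ (h y (Finset.mem_erase.mpr ⟨hyx, hy⟩))

theorem FOp.sat_of_DWin (φ : FOp A) :
    ∀ {n : ℕ} {ts : List (ℕ × ℕ)} {α β : ℕ → ℕ}, φ.qr ≤ n → DWin u v n ts →
      (∀ x ∈ φ.fv, (α x, β x) ∈ ts) → φ.Sat u α → φ.Sat v β := by
  induction φ with
  | atom a x =>
    rintro n ts α β - hw hts ⟨b, hb, hab⟩
    obtain ⟨b', c, hb', hc, hbc⟩ := hw.validPos.1 _ (hts x (by simp [FOp.fv]))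
    obtain rfl : b = b' := Option.some_injective _ (hb.symm.trans hb')
    exact ⟨c, hc, hab.trans hbc⟩
  | le x y =>
    rintro n ts α β - hw hts hs
    exact (hw.validPos.2 _ (hts x (by simp [FOp.fv])) _ (hts y (by simp [FOp.fv]))).1 hs
  | lt x y =>
    rintro n ts α β - hw hts hs
    have := hw.validPos.2 _ (hts y (by simp [FOp.fv])) _ (hts x (by simp [FOp.fv]))
    exact lt_of_not_ge fun h => hs.not_ge (this.2 h)
  | and φ ψ ihφ ihψ =>
    rintro n ts α β hqr hw hts ⟨hφ, hψ⟩
    simp only [FOp.qr, max_le_iff] at hqr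
    simp only [FOp.fv, Finset.mem_union] at hts
    exact ⟨ihφ hqr.1 hw (fun x hx => hts x (.inl hx)) hφ,
      ihψ hqr.2 hw (fun x hx => hts x (.inr hx)) hψ⟩
  | or φ ψ ihφ ihψ =>
    rintro n ts α β hqr hw hts (hφ | hψ)
    all_goals simp only [FOp.qr, max_le_iff] at hqr
    all_goals simp only [FOp.fv, Finset.mem_union] at hts
    · exact .inl (ihφ hqr.1 hw (fun x hx => hts x (.inl hx)) hφ)
    · exact .inr (ihψ hqr.2 hw (fun x hx => hts x (.inr hx)) hψ)
  | ex x φ ih =>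
    rintro (_ | n) ts α β hqr hw hts ⟨i, hi, hs⟩
    · simp [FOp.qr] at hqr
    obtain ⟨j, hj, hw'⟩ := hw.2.1 i hi
    exact ⟨j, hj, ih (Nat.le_of_succ_le_succ hqr) hw'
      (mem_cons_update_of_forall_mem_erase hts) hs⟩
  | all x φ ih =>
    rintro (_ | n) ts α β hqr hw hts hs j hj
    · simp [FOp.qr] at hqr
    obtain ⟨i, hi, hw'⟩ := hw.2.2 j hj
    exact ih (Nat.le_of_succ_le_succ hqr) hw' (mem_cons_update_of_forall_mem_erase hts) (hs i hi)

end Game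

theorem update_lt_of_forall_lt {α : ℕ → ℕ} {k i m : ℕ} (hα : ∀ x < k, α x < m) (hi : i < m) :
    ∀ x < k + 1, Function.update α k i x < m := by
  intro x hx
  rcases Nat.lt_succ_iff_lt_or_eq.mp hx with hx | rfl
  · simpa [Function.update_of_ne (Nat.ne_of_lt hx)] using hα x hx
  · simpa using hi

def tokens (α β : ℕ → ℕ) : ℕ → List (ℕ × ℕ)
  | 0 => []
  | k + 1 => (α k, β k) :: tokens α β k

theorem mem_tokens {α β : ℕ → ℕ} {k : ℕ} {p : ℕ × ℕ} :
    p ∈ tokens α β k ↔ ∃ x < k, (α x, β x) = p := by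
  induction k with
  | zero => simp [tokens]
  | succ k ih => simp [tokens, ih, Nat.le_iff_lt_or_eq, or_and_right, exists_or, eq_comm, or_comm]

theorem tokens_update_of_le {α β : ℕ → ℕ} {k x i j : ℕ} (hk : k ≤ x) :
    tokens (Function.update α x i) (Function.update β x j) k = tokens α β k := by
  induction k with
  | zero => rfl
  | succ k ih =>
    simp [tokens, Function.update_of_ne (Nat.ne_of_lt hk), ih (Nat.le_of_succ_le hk)]

theorem tokens_succ_update {α β : ℕ → ℕ} {k i j : ℕ} :
    tokens (Function.update α k i) (Function.update β k j) (k + 1) = (i, j) :: tokens α β k := by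
  simp [tokens, tokens_update_of_le le_rfl]

theorem erase_subset_range_of_subset_range_succ {s : Finset ℕ} {k : ℕ}
    (h : s ⊆ Finset.range (k + 1)) : s.erase k ⊆ Finset.range k :=
  Finset.subset_insert_iff.mp (by rwa [← Finset.range_add_one])

section Separation

variable {A : Type} [PartialOrder A]

def IsSeparating (u v : List A) (n k : ℕ) (α β : ℕ → ℕ) (φ : FOp A) : Prop :=
  φ.qr ≤ n ∧ φ.fv ⊆ Finset.range k ∧ φ.Sat u α ∧ ¬ φ.Sat v β

variable {u v : List A}

theorem exists_separating_of_not_validPos {n k : ℕ} {α β : ℕ → ℕ}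
    (hα : ∀ x < k, α x < u.length) (h : ¬ ValidPos u v (tokens α β k)) :
    ∃ φ, IsSeparating u v n k α β φ := by
  simp only [ValidPos, mem_tokens, not_and_or] at h
  push Not at h
  rcases h with ⟨_, ⟨x, hx, rfl⟩, hlabel⟩ | ⟨_, ⟨x, hx, rfl⟩, _, ⟨y, hy, rfl⟩, hord⟩
  · refine ⟨.atom (u[α x]'(hα x hx)) x, by simp [FOp.qr], by simpa [FOp.fv],
      ⟨_, by simp, le_rfl⟩, ?_⟩
    rintro ⟨b, hb, hab⟩
    exact hlabel _ _ (by simp) hb hab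
  · have hxy : {x, y} ⊆ Finset.range k := by simp [Finset.insert_subset_iff, hx, hy]
    rcases hord with ⟨h₁, h₂⟩ | ⟨h₁, h₂⟩
    · exact ⟨.le x y, by simp [FOp.qr], hxy, h₁, not_le.2 h₂⟩
    · exact ⟨.lt y x, by simp [FOp.qr], by simpa [FOp.fv, Finset.pair_comm] using hxy, h₁,
        not_lt.2 h₂⟩

theorem exists_separating_ex {n k i : ℕ} {α β : ℕ → ℕ} (hi : i < u.length)
    (h : ∀ j < v.length, ∃ φ,
      IsSeparating u v n (k + 1) (Function.update α k i) (Function.update β k j) φ) :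
    ∃ φ, IsSeparating u v (n + 1) k α β φ := by
  have : Nonempty (FOp A) := ⟨.le 0 0⟩
  choose! φ hφ using h
  have hmem : ∀ ψ ∈ (List.range v.length).map φ, ∃ j < v.length, φ j = ψ := by simp
  refine ⟨.ex k (.listAnd k ((List.range v.length).map φ)), ?_, ?_, ?_, ?_⟩
  · refine Nat.succ_le_succ (FOp.qr_listAnd_le fun ψ hψ => ?_)
    obtain ⟨j, hj, rfl⟩ := hmem ψ hψ
    exact (hφ j hj).1
  · refine erase_subset_range_of_subset_range_succ
      (FOp.fv_listAnd_subset (by simp) fun ψ hψ => ?_)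
    obtain ⟨j, hj, rfl⟩ := hmem ψ hψ
    exact (hφ j hj).2.1
  · refine ⟨i, hi, FOp.sat_listAnd.2 fun ψ hψ => ?_⟩
    obtain ⟨j, hj, rfl⟩ := hmem ψ hψ
    exact (hφ j hj).2.2.1
  · rintro ⟨j, hj, hs⟩
    exact (hφ j hj).2.2.2 (FOp.sat_listAnd.1 hs _ (List.mem_map_of_mem (List.mem_range.2 hj)))

theorem exists_separating_all {n k j : ℕ} {α β : ℕ → ℕ} (hj : j < v.length)
    (h : ∀ i < u.length, ∃ φ,
      IsSeparating u v n (k + 1) (Function.update α k i) (Function.update β k j) φ) :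
    ∃ φ, IsSeparating u v (n + 1) k α β φ := by
  have : Nonempty (FOp A) := ⟨.le 0 0⟩
  choose! φ hφ using h
  have hmem : ∀ ψ ∈ (List.range u.length).map φ, ∃ i < u.length, φ i = ψ := by simp
  refine ⟨.all k (.listOr k ((List.range u.length).map φ)), ?_, ?_, ?_, ?_⟩
  · refine Nat.succ_le_succ (FOp.qr_listOr_le fun ψ hψ => ?_)
    obtain ⟨i, hi, rfl⟩ := hmem ψ hψ
    exact (hφ i hi).1
  · refine erase_subset_range_of_subset_range_succ
      (FOp.fv_listOr_subset (by simp) fun ψ hψ => ?_)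
    obtain ⟨i, hi, rfl⟩ := hmem ψ hψ
    exact (hφ i hi).2.1
  · intro i hi
    exact FOp.sat_listOr.2 ⟨φ i, List.mem_map_of_mem (List.mem_range.2 hi), (hφ i hi).2.2.1⟩
  · intro hs
    obtain ⟨ψ, hψ, hs⟩ := FOp.sat_listOr.1 (hs j hj)
    obtain ⟨i, hi, rfl⟩ := hmem ψ hψ
    exact (hφ i hi).2.2.2 hs

theorem exists_separating_of_not_DWin : ∀ {n k : ℕ} {α β : ℕ → ℕ},
    (∀ x < k, α x < u.length) → ¬ DWin u v n (tokens α β k) →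
      ∃ φ, IsSeparating u v n k α β φ
  | 0, _, _, _, hα, h => exists_separating_of_not_validPos hα h
  | n + 1, k, α, β, hα, h => by
    rw [DWin, not_and_or, not_and_or] at h
    push Not at h
    rcases h with h | ⟨i, hi, h⟩ | ⟨j, hj, h⟩
    · exact exists_separating_of_not_validPos hα h
    · refine exists_separating_ex hi fun j hj => exists_separating_of_not_DWin
        (update_lt_of_forall_lt hα hi) ?_
      rw [tokens_succ_update]
      exact h j hj
    · refine exists_separating_all hj fun i hi => exists_separating_of_not_DWin
        (update_lt_of_forall_lt hα hi) ?_
      rw [tokens_succ_update]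
      exact h i hi

end Separation

theorem EFpre_iff_FOp_general {A : Type} [PartialOrder A]
    (u v : List A) (n : ℕ) :
    EFpre n u v ↔
      ∀ φ : FOp A, φ.fv = ∅ → φ.qr ≤ n →
        FOp.Sat u (fun _ => 0) φ → FOp.Sat v (fun _ => 0) φ := by
  constructor
  · intro hw φ hfv hqr hs
    exact φ.sat_of_DWin hqr hw (by simp [hfv]) hs
  · intro H
    by_contra hw
    obtain ⟨φ, hqr, hfv, hu, hv⟩ :=
      exists_separating_of_not_DWin (k := 0) (α := fun _ => 0) (β := fun _ => 0) (by simp) hw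
    exact hv (H φ (Finset.subset_empty.mp hfv) hqr hu)

/-- `u ⪯ₙ v` iff every FO⁺ sentence of quantifier rank at most
`n` satisfied by `u` is satisfied by `v`. -/
theorem EFpre_iff_FOp {A : Type} [Fintype A] [PartialOrder A]
    (u v : List A) (n : ℕ) :
    EFpre n u v ↔
      ∀ φ : FOp A, φ.fv = ∅ → φ.qr ≤ n →
        FOp.Sat u (fun _ => 0) φ → FOp.Sat v (fun _ => 0) φ :=
  EFpre_iff_FOp_general u v n
end

section
/- The minimal DFA of the language K = (↑a↑b↑c)* + A*⊤A* over A = P({a,b,c}) is counter-free: there are no word u, distinct states p ≠ q, and integer k ≥ 1 such that reading u sends p to q and reading u^k sends q to p. Consequently K is FO-definable. -/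
/-- The powerset alphabet `𝒫({a,b,c})`, ordered by inclusion. -/
abbrev AB : Type := Finset (Fin 3)

def la : AB := {0}
def lb : AB := {1}
def lc : AB := {2}
def top3 : AB := Finset.univ

/-- Words in `(↑a ↑b ↑c)*` : concatenations of three-letter blocks whose
letters contain `a`, `b`, `c` respectively. -/
inductive KBlocks : List AB → Prop
  | nil : KBlocks []
  | cons {s t r : AB} {w : List AB} :
      (0 : Fin 3) ∈ s → (1 : Fin 3) ∈ t → (2 : Fin 3) ∈ r →
      KBlocks w → KBlocks (s :: t :: r :: w)

/-- The language `K = (↑a ↑b ↑c)* + A* ⊤ A*`. -/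
def K : Set (List AB) := {u | KBlocks u ∨ top3 ∈ u}
/-- Syntax of full first-order logic on words (with negation and exact
letter predicates). -/
inductive FOf (A : Type) where
  | letter (a : A) (x : ℕ)
  | le (x y : ℕ)
  | lt (x y : ℕ)
  | not (φ : FOf A)
  | and (φ ψ : FOf A)
  | or (φ ψ : FOf A)
  | ex (x : ℕ) (φ : FOf A)
  | all (x : ℕ) (φ : FOf A)

/-- Semantics of `FOf` formulas on words. -/
def FOf.Sat {A : Type} (u : List A) (α : ℕ → ℕ) : FOf A → Prop
  | letter a x => u[α x]? = some a
  | le x y => α x ≤ α y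
  | lt x y => α x < α y
  | not φ => ¬ FOf.Sat u α φ
  | and φ ψ => FOf.Sat u α φ ∧ FOf.Sat u α ψ
  | or φ ψ => FOf.Sat u α φ ∨ FOf.Sat u α ψ
  | ex x φ => ∃ i, i < u.length ∧ FOf.Sat u (Function.update α x i) φ
  | all x φ => ∀ i, i < u.length → FOf.Sat u (Function.update α x i) φ

/-- Free variables. -/
def FOf.fv {A : Type} : FOf A → Finset ℕ
  | letter _ x => {x}
  | le x y => {x, y}
  | lt x y => {x, y}
  | not φ => φ.fv
  | and φ ψ => φ.fv ∪ ψ.fv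
  | or φ ψ => φ.fv ∪ ψ.fv
  | ex x φ => φ.fv.erase x
  | all x φ => φ.fv.erase x

/-- A language is FO-definable if it is the set of words satisfying some
FO sentence. -/
def FODefinable {A : Type} (L : Set (List A)) : Prop :=
  ∃ φ : FOf A, φ.fv = ∅ ∧ L = {u | FOf.Sat u (fun _ => 0) φ}

/-- States of the minimal DFA of `K`. -/
inductive St where
  | qa | qb | qc | qtop | bot
  deriving DecidableEq

/-- Transition function of the minimal DFA of `K`. -/
def dfaStep (p : St) (s : AB) : St :=
  match p with
  | St.qa => if s = top3 then St.qtop else if (0 : Fin 3) ∈ s then St.qb else St.bot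
  | St.qb => if s = top3 then St.qtop else if (1 : Fin 3) ∈ s then St.qc else St.bot
  | St.qc => if s = top3 then St.qtop else if (2 : Fin 3) ∈ s then St.qa else St.bot
  | St.qtop => St.qtop
  | St.bot => if s = top3 then St.qtop else St.bot

/-- Running the DFA on a word. -/
def dfaRun (p : St) (u : List AB) : St := u.foldl dfaStep p

/-- `u^k`. -/
def wpow (u : List AB) (k : ℕ) : List AB := (List.replicate k u).flatten

/-!
The states `q_a, q_b, q_c` form a cycle indexed by a phase in `ℤ/3`, and a run stays on the
cycle exactly while no letter is `⊤` and every letter contains the current phase; it then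
advances the phase by the length of the word. So a cycle `p →u q →u^k p` with `p ≠ q` runs
through phases `a →u a + d →u^k a` with `d = |u| ≢ 0 (mod 3)`. For `k = 1` this forces
`2d ≡ 0`; for `k ≥ 2` the first letter of `u` is read in the three phases `a, a + d, a + 2d`,
so it is `⊤`.

First-order logic cannot count modulo 3, but here the phase is visible locally. Two adjacent
letters `s, t ∉ {⊤}` allow two phase transitions only if `s = {m}ᶜ`, `t = {m + 1}ᶜ`; at any other
pair, as at both ends of the word, the phase is pinned. Along a run of such flexible pairs the
labels `m` advance with the phase, so the phase offset between two pinned positions joined by a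
flexible run is the difference of their labels.
-/

open Fin.NatCast

namespace St

def ofPhase : Fin 3 → St
  | 0 => qa
  | 1 => qb
  | 2 => qc

lemma ofPhase_injective : Function.Injective ofPhase := by decide

lemma qtop_ne_ofPhase (p : Fin 3) : qtop ≠ ofPhase p := by fin_cases p <;> decide

lemma bot_ne_ofPhase (p : Fin 3) : bot ≠ ofPhase p := by fin_cases p <;> decide

lemma eq_ofPhase_or (p : St) : (∃ a, p = ofPhase a) ∨ p = qtop ∨ p = bot := by
  cases p
  exacts [.inl ⟨0, rfl⟩, .inl ⟨1, rfl⟩, .inl ⟨2, rfl⟩, .inr (.inl rfl), .inr (.inr rfl)]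

end St

open St

@[simp] lemma dfaRun_nil (p : St) : dfaRun p [] = p := rfl

@[simp] lemma dfaRun_cons (p : St) (s : AB) (w : List AB) :
    dfaRun p (s :: w) = dfaRun (dfaStep p s) w := rfl

lemma dfaRun_append (p : St) (u v : List AB) : dfaRun p (u ++ v) = dfaRun (dfaRun p u) v :=
  List.foldl_append ..

lemma dfaStep_eq_qtop_iff {p : St} {s : AB} : dfaStep p s = qtop ↔ p = qtop ∨ s = top3 := by
  cases p <;> simp only [dfaStep] <;> (try split_ifs) <;> simp_all

lemma dfaStep_ofPhase (p : Fin 3) {s : AB} (hs : s ≠ top3) :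
    dfaStep (ofPhase p) s = if p ∈ s then ofPhase (p + 1) else bot := by
  fin_cases p <;> simp [dfaStep, ofPhase, hs]

@[simp] lemma dfaRun_qtop (u : List AB) : dfaRun qtop u = qtop := by
  induction u with
  | nil => rfl
  | cons s w ih => exact ih

lemma dfaRun_bot (u : List AB) : dfaRun bot u = bot ∨ dfaRun bot u = qtop := by
  induction u with
  | nil => exact Or.inl rfl
  | cons s w ih =>
    by_cases hs : s = top3
    · simp [hs, dfaStep_eq_qtop_iff.2]
    · simpa [dfaStep, hs] using ih

lemma dfaRun_eq_qtop_iff {p : St} (hp : p ≠ qtop) {u : List AB} :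
    dfaRun p u = qtop ↔ top3 ∈ u := by
  induction u generalizing p with
  | nil => simpa using hp
  | cons s w ih =>
    by_cases hs : s = top3
    · simp [hs, dfaStep_eq_qtop_iff.2]
    · simp only [dfaRun_cons, List.mem_cons, Ne.symm hs, false_or]
      exact ih (by simp [dfaStep_eq_qtop_iff, hp, hs])

def Phased (p : Fin 3) (u : List AB) : Prop := ∀ i (hi : i < u.length), p + (i : Fin 3) ∈ u[i]

lemma phased_cons {p : Fin 3} {s : AB} {w : List AB} :
    Phased p (s :: w) ↔ p ∈ s ∧ Phased (p + 1) w := by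
  constructor
  · intro h
    have h0 := h 0 (by simp)
    simp only [List.getElem_cons_zero, Nat.cast_zero, add_zero] at h0
    refine ⟨h0, fun i hi => ?_⟩
    have hi' := h (i + 1) (by simpa using hi)
    simp only [List.getElem_cons_succ] at hi'
    simpa [add_assoc, add_comm (1 : Fin 3)] using hi'
  · rintro ⟨h0, h⟩ (_ | i) hi
    · simpa using h0
    · simpa [add_assoc, add_comm (1 : Fin 3)] using h i (by simpa using hi)

lemma dfaRun_ofPhase_eq_ofPhase_iff {p q : Fin 3} {u : List AB} :
    dfaRun (ofPhase p) u = ofPhase q ↔ top3 ∉ u ∧ Phased p u ∧ q = p + (u.length : Fin 3) := by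
  induction u generalizing p with
  | nil => simp [Phased, ofPhase_injective.eq_iff, eq_comm]
  | cons s w ih =>
    by_cases hs : s = top3
    · simp [hs, phased_cons, dfaStep_eq_qtop_iff.2, qtop_ne_ofPhase]
    by_cases hp : p ∈ s
    · simp [dfaStep_ofPhase p hs, hp, ih, phased_cons, Ne.symm hs, add_assoc, add_comm (1 : Fin 3)]
    · have hbot : dfaRun bot w ≠ ofPhase q := by
        rcases dfaRun_bot w with h | h <;> rw [h]
        exacts [bot_ne_ofPhase q, qtop_ne_ofPhase q]
      simp [dfaStep_ofPhase p hs, hp, phased_cons, hbot]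

lemma exists_ofPhase_of_dfaRun_eq {r : St} {u : List AB} {q : Fin 3}
    (h : dfaRun r u = ofPhase q) : ∃ p, r = ofPhase p := by
  rcases r.eq_ofPhase_or with hr | rfl | rfl
  · exact hr
  · exact absurd h (by simpa using qtop_ne_ofPhase q)
  · rcases dfaRun_bot u with h' | h' <;> rw [h'] at h
    exacts [absurd h (bot_ne_ofPhase q), absurd h (qtop_ne_ofPhase q)]

lemma phased_of_kblocks {u : List AB} (h : KBlocks u) : Phased 0 u ∧ 3 ∣ u.length := by
  induction h with
  | nil => exact ⟨fun i hi => absurd hi (by simp), by simp⟩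
  | cons hs ht hr _ ih =>
    refine ⟨?_, by simpa using ih.2⟩
    simpa [phased_cons, hs, ht, hr, one_add_one_eq_two] using ih.1

lemma kblocks_of_phased : ∀ {u : List AB}, Phased 0 u → 3 ∣ u.length → KBlocks u
  | [], _, _ => .nil
  | [_], _, h | [_, _], _, h => by simp at h
  | _ :: _ :: _ :: w, hph, hlen => by
    obtain ⟨h0, h1, h2, hw⟩ := by simpa only [phased_cons] using hph
    exact .cons h0 h1 h2 (kblocks_of_phased (by simpa using hw) (by simpa using hlen))

lemma kblocks_iff {u : List AB} : KBlocks u ↔ Phased 0 u ∧ 3 ∣ u.length :=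
  ⟨phased_of_kblocks, fun h => kblocks_of_phased h.1 h.2⟩

theorem mem_K_iff (u : List AB) :
    u ∈ K ↔ dfaRun qa u = qa ∨ dfaRun qa u = qtop := by
  have hqa : qa = ofPhase 0 := rfl
  rw [dfaRun_eq_qtop_iff (by decide), hqa, dfaRun_ofPhase_eq_ofPhase_iff]
  simp only [K, Set.mem_ofPred_eq, kblocks_iff, zero_add, eq_comm (a := (0 : Fin 3)),
    Fin.natCast_eq_zero]
  tauto

lemma dfaRun_wpow_succ (p : St) (u : List AB) (k : ℕ) :
    dfaRun p (wpow u (k + 1)) = dfaRun (dfaRun p u) (wpow u k) := by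
  rw [wpow, List.replicate_succ, List.flatten_cons, dfaRun_append, wpow]

lemma eq_top3_of_progression_mem : ∀ (s : AB) (a d : Fin 3), d ≠ 0 →
    a ∈ s → a + d ∈ s → a + d + d ∈ s → s = top3 := by
  decide

lemma not_cycle_ofPhase {u : List AB} {a b : Fin 3} {k : ℕ} (hab : a ≠ b)
    (hab' : dfaRun (ofPhase a) u = ofPhase b)
    (hba : dfaRun (ofPhase b) (wpow u (k + 1)) = ofPhase a) : False := by
  obtain ⟨hu, ha, rfl⟩ := dfaRun_ofPhase_eq_ofPhase_iff.1 hab'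
  set d : Fin 3 := ((u.length : ℕ) : Fin 3) with hd
  rw [dfaRun_wpow_succ] at hba
  obtain ⟨c, hc⟩ := exists_ofPhase_of_dfaRun_eq hba
  obtain ⟨-, hb, rfl⟩ := dfaRun_ofPhase_eq_ofPhase_iff.1 hc
  rw [hc] at hba
  have hd0 : d ≠ 0 := fun h => hab (by simp [h])
  cases k with
  | zero =>
    have add_add_ne_self : ∀ a d : Fin 3, d ≠ 0 → a + d + d ≠ a := by decide
    exact add_add_ne_self a d hd0 (ofPhase_injective hba)
  | succ k =>
    rw [dfaRun_wpow_succ] at hba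
    obtain ⟨e, he⟩ := exists_ofPhase_of_dfaRun_eq hba
    obtain ⟨-, hc, -⟩ := dfaRun_ofPhase_eq_ofPhase_iff.1 he
    have hlen : 0 < u.length := Nat.pos_of_ne_zero fun h => hd0 (by simp [hd, h])
    apply hu
    rw [← eq_top3_of_progression_mem _ a d hd0 (by simpa using ha 0 hlen)
      (by simpa using hb 0 hlen) (by simpa using hc 0 hlen)]
    exact List.getElem_mem hlen

theorem dfa_counterFree : ¬ ∃ (u : List AB) (p q : St) (k : ℕ), 1 ≤ k ∧ p ≠ q ∧
    dfaRun p u = q ∧ dfaRun q (wpow u k) = p := by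
  rintro ⟨u, p, q, k, hk, hpq, hpu, hqu⟩
  obtain ⟨k, rfl⟩ : ∃ j, k = j + 1 := ⟨k - 1, by omega⟩
  rcases p.eq_ofPhase_or with ⟨a, rfl⟩ | rfl | rfl
  · obtain ⟨b, rfl⟩ := exists_ofPhase_of_dfaRun_eq hqu
    exact not_cycle_ofPhase (fun h => hpq (congrArg ofPhase h)) hpu hqu
  · exact hpq (hpu ▸ (dfaRun_qtop u).symm)
  · rcases dfaRun_bot u with h | h <;> rw [hpu] at h
    · exact hpq h.symm
    · rw [h, dfaRun_qtop] at hqu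
      exact hpq (hqu ▸ h.symm)

/-- Among letters other than `⊤`, the adjacent pairs admitting two phase transitions. -/
def Flexible (s t : AB) : Prop := ∃ m : Fin 3, s = {m}ᶜ ∧ t = {m + 1}ᶜ

instance (s t : AB) : Decidable (Flexible s t) := by unfold Flexible; infer_instance

lemma Flexible.add_one_mem : ∀ {s t : AB}, Flexible s t → ∀ {p : Fin 3}, p ∈ s → p + 1 ∈ t := by
  decide

lemma eq_or_flexible : ∀ {s t : AB}, s ≠ top3 → t ≠ top3 → ∀ {p q : Fin 3},
    p ∈ s → p + 1 ∈ t → q ∈ s → q + 1 ∈ t → p = q ∨ Flexible s t := by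
  decide

namespace Word

variable (u : List AB)

def Step (i : ℕ) (p : Fin 3) : Prop := p ∈ u.getD i ∅ ∧ p + 1 ∈ u.getD (i + 1) ∅

def FlexAt (i : ℕ) : Prop := Flexible (u.getD i ∅) (u.getD (i + 1) ∅)

def FlexRun (i j : ℕ) : Prop := ∀ k, i ≤ k → k < j → FlexAt u k

def RigidStep (i : ℕ) (p : Fin 3) : Prop := i + 1 < u.length ∧ ¬ FlexAt u i ∧ Step u i p

/-- The phase `p` is forced at position `i` by the neighbourhood of `i`. -/
def Pinned (i : ℕ) (p : Fin 3) : Prop :=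
  (i = 0 ∧ p = 0) ∨ (i + 1 = u.length ∧ p = 2) ∨ RigidStep u i p ∨
    ∃ j, j + 1 = i ∧ RigidStep u j (p - 1)

/-- A first-order condition equivalent to membership in `(↑a ↑b ↑c)*` for words without `⊤`. -/
def Cond : Prop :=
  (∀ i, i + 1 < u.length → ∃ p, Step u i p) ∧
  (∀ i < u.length, ∀ p, Pinned u i p → p ∈ u.getD i ∅) ∧
  (∀ i < u.length, ∀ p q, Pinned u i p → Pinned u i q → p = q) ∧
  (∀ i j, i < j → j < u.length → FlexRun u i j →
    ∀ p q m n, Pinned u i p → Pinned u j q → u.getD i ∅ = {m}ᶜ → u.getD j ∅ = {n}ᶜ →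
      q - p = n - m)

variable {u}

lemma FlexRun.getD_eq {i d : ℕ} {m : Fin 3} (hrun : FlexRun u i (i + d))
    (hi : u.getD i ∅ = {m}ᶜ) : u.getD (i + d) ∅ = {m + (d : Fin 3)}ᶜ := by
  induction d with
  | zero => simpa using hi
  | succ d ih =>
    obtain ⟨m', hm', hnext⟩ := hrun (i + d) (by omega) (by omega)
    rw [ih fun k hk hk' => hrun k hk (by omega)] at hm'
    obtain rfl : m' = m + d := by simpa using hm'.symm
    rw [← add_assoc, hnext, Nat.cast_succ, add_assoc]

lemma getD_ne_top3 (htop : top3 ∉ u) (i : ℕ) : u.getD i ∅ ≠ top3 := by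
  rcases lt_or_ge i u.length with hi | hi
  · rw [List.getD_eq_getElem _ _ hi]
    exact fun h => htop (h ▸ List.getElem_mem hi)
  · rw [List.getD_eq_default _ _ hi]
    decide

lemma phased_zero_iff : Phased 0 u ↔ ∀ i < u.length, (i : Fin 3) ∈ u.getD i ∅ := by
  refine forall₂_congr fun i hi => ?_
  rw [List.getD_eq_getElem _ _ hi, zero_add]

lemma RigidStep.eq_of_phased (htop : top3 ∉ u) (hph : Phased 0 u) {i : ℕ} {p : Fin 3}
    (h : RigidStep u i p) : p = i := by
  obtain ⟨hi, hflex, hp, hp'⟩ := h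
  have hi' := phased_zero_iff.1 hph (i + 1) hi
  rw [Nat.cast_succ] at hi'
  exact (eq_or_flexible (getD_ne_top3 htop i) (getD_ne_top3 htop (i + 1)) hp hp'
    (phased_zero_iff.1 hph i (by omega)) hi').resolve_right hflex

lemma Pinned.eq_of_phased (htop : top3 ∉ u) (hph : Phased 0 u) (hlen : 3 ∣ u.length)
    {i : ℕ} {p : Fin 3} (h : Pinned u i p) : p = i := by
  rcases h with ⟨rfl, rfl⟩ | ⟨hi, rfl⟩ | h | ⟨j, rfl, h⟩
  · simp
  · have h0 : ((i + 1 : ℕ) : Fin 3) = 0 := by rwa [hi, Fin.natCast_eq_zero]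
    have eq_two_of_add_one_eq_zero : ∀ x : Fin 3, x + 1 = 0 → 2 = x := by decide
    exact eq_two_of_add_one_eq_zero _ (by simpa using h0)
  · exact h.eq_of_phased htop hph
  · rw [Nat.cast_succ, ← h.eq_of_phased htop hph, sub_add_cancel]

theorem cond_of_phased (htop : top3 ∉ u) (hph : Phased 0 u) (hlen : 3 ∣ u.length) :
    Cond u := by
  have hpin {i p} (h : Pinned u i p) : p = i := h.eq_of_phased htop hph hlen
  have hmem := phased_zero_iff.1 hph
  refine ⟨fun i hi => ⟨i, hmem i (by omega), ?_⟩, fun i hi p hp => hpin hp ▸ hmem i hi,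
    fun i _ p q hp hq => (hpin hp).trans (hpin hq).symm,
    fun i j hij _ hrun p q m n hp hq hm hn => ?_⟩
  · simpa using hmem (i + 1) hi
  · obtain ⟨d, rfl⟩ := Nat.exists_eq_add_of_le hij.le
    have hnm : n = m + d := by simpa using hn.symm.trans (hrun.getD_eq hm)
    rw [hnm, hpin hp, hpin hq, Nat.cast_add, add_sub_cancel_left, add_sub_cancel_left]

lemma FlexRun.snoc {j i : ℕ} (hrun : FlexRun u j i) (hflex : FlexAt u i) :
    FlexRun u j (i + 1) := fun k hk hk' => by
  rcases Nat.lt_or_eq_of_le (Nat.le_of_lt_succ hk') with hk' | rfl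
  exacts [hrun k hk hk', hflex]

lemma exists_pinned_flexRun (hstep : ∀ i, i + 1 < u.length → ∃ p, Step u i p) :
    ∀ i < u.length, ∃ j ≤ i, (∃ p, Pinned u j p) ∧ FlexRun u j i
  | 0, _ => ⟨0, le_rfl, ⟨0, .inl ⟨rfl, rfl⟩⟩, fun _ _ _ => by omega⟩
  | i + 1, hi => by
    by_cases hflex : FlexAt u i
    · obtain ⟨j, hj, hpin, hrun⟩ := exists_pinned_flexRun hstep i (by omega)
      exact ⟨j, by omega, hpin, hrun.snoc hflex⟩
    · obtain ⟨p, hp⟩ := hstep i hi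
      exact ⟨i + 1, le_rfl, ⟨p + 1, .inr <| .inr <| .inr ⟨i, rfl, by simpa using ⟨hi, hflex, hp⟩⟩⟩,
        fun _ _ _ => by omega⟩

lemma phase_of_cond (hc : Cond u) :
    ∀ i < u.length, (i : Fin 3) ∈ u.getD i ∅ ∧ ∀ p, Pinned u i p → p = i := by
  obtain ⟨hstep, hpinMem, hunique, hrel⟩ := hc
  intro i
  induction i using Nat.strong_induction_on with
  | _ i ih =>
  intro hi
  rcases i with _ | i
  · have hpin0 : Pinned u 0 0 := .inl ⟨rfl, rfl⟩
    exact ⟨by simpa using hpinMem 0 hi 0 hpin0, fun p hp => hunique 0 hi p 0 hp hpin0⟩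
  obtain ⟨hmem, -⟩ := ih i (by omega) (by omega)
  by_cases hflex : FlexAt u i
  · refine ⟨by simpa using hflex.add_one_mem hmem, fun q hq => ?_⟩
    obtain ⟨j, hj, ⟨p, hp⟩, hrun⟩ := exists_pinned_flexRun hstep i (by omega)
    replace hrun := hrun.snoc hflex
    have hpj : p = j := (ih j (by omega) (by omega)).2 p hp
    obtain ⟨m, hm, -⟩ := hrun j le_rfl (by omega)
    obtain ⟨d, hd⟩ := Nat.exists_eq_add_of_le (by omega : j ≤ i + 1)
    rw [hd] at hrun hq hi ⊢
    have hqp := hrel j (j + d) (by omega) hi hrun p q m _ hp hq hm (hrun.getD_eq hm)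
    rw [add_sub_cancel_left, sub_eq_iff_eq_add, hpj] at hqp
    rw [hqp, add_comm, Nat.cast_add]
  · obtain ⟨p, hp⟩ := hstep i hi
    have hpi : p = i := (ih i (by omega) (by omega)).2 p (.inr <| .inr <| .inl ⟨hi, hflex, hp⟩)
    subst hpi
    have hpin : Pinned u (i + 1) ((i + 1 : ℕ) : Fin 3) :=
      .inr <| .inr <| .inr ⟨i, rfl, by simpa using ⟨hi, hflex, hp⟩⟩
    exact ⟨by simpa using hp.2, fun q hq => hunique _ hi q _ hq hpin⟩

theorem cond_iff (htop : top3 ∉ u) : Cond u ↔ Phased 0 u ∧ 3 ∣ u.length := by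
  refine ⟨fun hc => ⟨?_, ?_⟩, fun h => cond_of_phased htop h.1 h.2⟩
  · exact phased_zero_iff.2 fun i hi => (phase_of_cond hc i hi).1
  · rcases hn : u.length with _ | n
    · exact dvd_zero 3
    have h2 := (phase_of_cond hc n (by omega)).2 2 (.inr <| .inl ⟨hn.symm, rfl⟩)
    rw [← Fin.natCast_eq_zero, Nat.cast_succ, ← h2]
    rfl

end Word

namespace FOf

variable {A : Type}

def ff : FOf A := lt 0 0

def tt : FOf A := not ff

def imp (φ ψ : FOf A) : FOf A := or (not φ) ψ

def bigOr (l : List (FOf A)) : FOf A := l.foldr or ff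

def bigAnd (l : List (FOf A)) : FOf A := l.foldr and tt

def ofProp (P : Prop) [Decidable P] : FOf A := if P then tt else ff

def finAll {n : ℕ} (φ : Fin n → FOf A) : FOf A := bigAnd ((List.finRange n).map φ)

def finAny {n : ℕ} (φ : Fin n → FOf A) : FOf A := bigOr ((List.finRange n).map φ)

/-- Position `y` follows position `x`; `z` is bound. -/
def succ (x y z : ℕ) : FOf A := and (lt x y) (not (ex z (and (lt x z) (lt z y))))

def first (x z : ℕ) : FOf A := not (ex z (lt z x))

def last (x z : ℕ) : FOf A := not (ex z (lt x z))

def letterIn (l : List A) (x : ℕ) : FOf A := bigOr (l.map (letter · x))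

variable {u : List A} {α : ℕ → ℕ}

@[simp] lemma sat_ff : ¬ Sat u α ff := by simp [ff, Sat]

@[simp] lemma sat_tt : Sat u α tt := by simp [tt, Sat]

@[simp] lemma sat_not {φ : FOf A} : Sat u α (not φ) ↔ ¬ Sat u α φ := Iff.rfl

@[simp] lemma sat_and {φ ψ : FOf A} : Sat u α (and φ ψ) ↔ Sat u α φ ∧ Sat u α ψ := Iff.rfl

@[simp] lemma sat_or {φ ψ : FOf A} : Sat u α (or φ ψ) ↔ Sat u α φ ∨ Sat u α ψ := Iff.rfl

lemma sat_ex {x : ℕ} {φ : FOf A} :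
    Sat u α (ex x φ) ↔ ∃ i, i < u.length ∧ Sat u (Function.update α x i) φ := Iff.rfl

lemma sat_all {x : ℕ} {φ : FOf A} :
    Sat u α (all x φ) ↔ ∀ i, i < u.length → Sat u (Function.update α x i) φ := Iff.rfl

@[simp] lemma sat_imp {φ ψ : FOf A} : Sat u α (imp φ ψ) ↔ (Sat u α φ → Sat u α ψ) := by
  simp [imp, imp_iff_not_or]

@[simp] lemma sat_bigOr {l : List (FOf A)} : Sat u α (bigOr l) ↔ ∃ φ ∈ l, Sat u α φ := by
  induction l <;> simp_all [bigOr]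

@[simp] lemma sat_bigAnd {l : List (FOf A)} : Sat u α (bigAnd l) ↔ ∀ φ ∈ l, Sat u α φ := by
  induction l <;> simp_all [bigAnd]

@[simp] lemma sat_ofProp {P : Prop} [Decidable P] : Sat u α (ofProp P) ↔ P := by
  by_cases hP : P <;> simp [ofProp, hP]

@[simp] lemma sat_finAll {n : ℕ} {φ : Fin n → FOf A} : Sat u α (finAll φ) ↔ ∀ i, Sat u α (φ i) := by
  simp [finAll]

@[simp] lemma sat_finAny {n : ℕ} {φ : Fin n → FOf A} : Sat u α (finAny φ) ↔ ∃ i, Sat u α (φ i) := by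
  simp [finAny]

@[simp] lemma sat_letterIn {l : List A} {x : ℕ} :
    Sat u α (letterIn l x) ↔ ∃ a ∈ l, u[α x]? = some a := by
  simp [letterIn, Sat]

lemma sat_succ {x y z : ℕ} (hxz : x ≠ z) (hyz : y ≠ z) (hy : α y < u.length) :
    Sat u α (succ x y z) ↔ α y = α x + 1 := by
  simp only [succ, Sat, Function.update_apply, if_neg hxz, if_neg hyz, if_pos]
  constructor
  · rintro ⟨hlt, hnone⟩
    by_contra hne
    exact hnone ⟨α x + 1, by omega, by omega, by omega⟩
  · rintro h
    exact ⟨by omega, fun ⟨i, _, h3, h4⟩ => by omega⟩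

lemma sat_first {x z : ℕ} (hxz : x ≠ z) (hx : α x < u.length) :
    Sat u α (first x z) ↔ α x = 0 := by
  simp only [first, Sat, Function.update_apply, if_neg hxz, if_pos]
  exact ⟨fun h => by_contra fun hne => h ⟨0, by omega, by omega⟩, fun h ⟨i, _, hi⟩ => by omega⟩

lemma sat_last {x z : ℕ} (hxz : x ≠ z) (hx : α x < u.length) :
    Sat u α (last x z) ↔ α x + 1 = u.length := by
  simp only [last, Sat, Function.update_apply, if_neg hxz, if_pos]
  exact ⟨fun h => by_contra fun hne => h ⟨α x + 1, by omega, by omega⟩,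
    fun h ⟨i, hi, hi'⟩ => by omega⟩

open Function in
lemma sat_ex_succ_and {x z w : ℕ} {φ : FOf A} (hxz : x ≠ z) (hxw : x ≠ w) (hzw : z ≠ w) :
    Sat u α (ex z (and (succ x z w) φ)) ↔ α x + 1 < u.length ∧ Sat u (update α z (α x + 1)) φ := by
  simp only [sat_ex, sat_and]
  constructor
  · rintro ⟨i, hi, hsucc, hφ⟩
    rw [sat_succ hxw hzw (by simpa using hi), update_self, update_of_ne hxz] at hsucc
    exact ⟨hsucc ▸ hi, hsucc ▸ hφ⟩
  · rintro ⟨hi, hφ⟩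
    refine ⟨α x + 1, hi, ?_, hφ⟩
    rw [sat_succ hxw hzw (by simpa using hi), update_self, update_of_ne hxz]

open Function in
lemma sat_ex_pred_and {x z w : ℕ} {φ : FOf A} (hxz : x ≠ z) (hxw : x ≠ w) (hzw : z ≠ w)
    (hx : α x < u.length) :
    Sat u α (ex z (and (succ z x w) φ)) ↔ ∃ j, j + 1 = α x ∧ Sat u (update α z j) φ := by
  simp only [sat_ex, sat_and]
  constructor
  · rintro ⟨i, hi, hsucc, hφ⟩
    rw [sat_succ hzw hxw (by rwa [update_of_ne hxz]), update_self, update_of_ne hxz] at hsucc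
    exact ⟨i, hsucc.symm, hφ⟩
  · rintro ⟨j, hj, hφ⟩
    refine ⟨j, by omega, ?_, hφ⟩
    rw [sat_succ hzw hxw (by rwa [update_of_ne hxz]), update_self, update_of_ne hxz, hj]

open Function in
lemma sat_all_all_succ_imp {x y z : ℕ} {φ : FOf A} (hxy : x ≠ y) (hxz : x ≠ z) (hyz : y ≠ z) :
    Sat u α (all x (all y (imp (succ x y z) φ))) ↔
      ∀ i, i + 1 < u.length → Sat u (update (update α x i) y (i + 1)) φ := by
  simp only [sat_all, sat_imp]
  constructor
  · intro h i hi
    refine h i (by omega) (i + 1) hi ?_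
    rw [sat_succ hxz hyz (by simpa using hi), update_self, update_of_ne hxy, update_self]
  · intro h i _ j hj hsucc
    rw [sat_succ hxz hyz (by simpa using hj), update_self, update_of_ne hxy, update_self] at hsucc
    subst hsucc
    exact h i hj

end FOf

lemma getElem?_eq_some_iff_getD {u : List AB} {i : ℕ} {s : AB} :
    u[i]? = some s ↔ i < u.length ∧ u.getD i ∅ = s := by
  rw [List.getElem?_eq_some_iff]
  exact ⟨fun ⟨h, hs⟩ => ⟨h, by rw [List.getD_eq_getElem _ _ h, hs]⟩,
    fun ⟨h, hs⟩ => ⟨h, by rw [← List.getD_eq_getElem _ ∅ h, hs]⟩⟩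

def letters : List AB := [∅, {0}, {1}, {2}, {0, 1}, {0, 2}, {1, 2}, Finset.univ]

lemma mem_letters : ∀ s : AB, s ∈ letters := by decide

namespace Word

open FOf Function

variable {u : List AB} {α : ℕ → ℕ}

def memF (e : Fin 3) (x : ℕ) : FOf AB := letterIn (letters.filter (e ∈ ·)) x

lemma sat_memF {e : Fin 3} {x : ℕ} (hx : α x < u.length) :
    Sat u α (memF e x) ↔ e ∈ u.getD (α x) ∅ := by
  simp [memF, mem_letters, hx]

def flexF (x y : ℕ) : FOf AB :=
  finAny fun m => and (letter {m}ᶜ x) (letter {m + 1}ᶜ y)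

lemma sat_flexF {x y : ℕ} (hx : α x < u.length) (hy : α y < u.length) :
    Sat u α (flexF x y) ↔ Flexible (u.getD (α x) ∅) (u.getD (α y) ∅) := by
  simp [flexF, Sat, hx, hy, Flexible]

def rigidF (p : Fin 3) (x y : ℕ) : FOf AB := and (not (flexF x y)) (and (memF p x) (memF (p + 1) y))

lemma sat_rigidF {p : Fin 3} {x : ℕ} (hx : α x + 1 < u.length) {y : ℕ} (hy : α y = α x + 1) :
    Sat u α (rigidF p x y) ↔ RigidStep u (α x) p := by
  simp [rigidF, RigidStep, FlexAt, Step, sat_flexF, sat_memF, hx, hy, show α x < u.length by omega]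

/-- The bound variables `x + 1` and `x + 2` differ from `x`, so `pinF p x` means the same for
every `x`. -/
def pinF (p : Fin 3) (x : ℕ) : FOf AB :=
  or (and (ofProp (p = 0)) (first x (x + 1))) <|
  or (and (ofProp (p = 2)) (last x (x + 1))) <|
  or (ex (x + 1) (and (succ x (x + 1) (x + 2)) (rigidF p x (x + 1)))) <|
    ex (x + 1) (and (succ (x + 1) x (x + 2)) (rigidF (p - 1) (x + 1) x))

lemma sat_pinF {p : Fin 3} {x : ℕ} (hx : α x < u.length) :
    Sat u α (pinF p x) ↔ Pinned u (α x) p := by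
  simp only [pinF, sat_or, Pinned]
  refine or_congr ?_ (or_congr ?_ (or_congr ?_ ?_))
  · simp [sat_first (Nat.ne_add_one x) hx, and_comm]
  · simp [sat_last (Nat.ne_add_one x) hx, and_comm]
  · rw [sat_ex_succ_and (by omega) (by omega) (by omega)]
    have key (h : α x + 1 < u.length) :
        Sat u (update α (x + 1) (α x + 1)) (rigidF p x (x + 1)) ↔ RigidStep u (α x) p := by
      rw [sat_rigidF] <;> simp [h]
    exact ⟨fun ⟨h, hr⟩ => (key h).1 hr, fun hr => ⟨hr.1, (key hr.1).2 hr⟩⟩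
  · rw [sat_ex_pred_and (by omega) (by omega) (by omega) hx]
    refine exists_congr fun j => and_congr_right fun hj => ?_
    rw [sat_rigidF] <;> simp [hj, hx]

def stepsF : FOf AB :=
  all 0 (all 1 (imp (succ 0 1 2) (finAny fun p => and (memF p 0) (memF (p + 1) 1))))

lemma sat_stepsF : Sat u α stepsF ↔ ∀ i, i + 1 < u.length → ∃ p, Step u i p := by
  rw [stepsF, sat_all_all_succ_imp (by decide) (by decide) (by decide)]
  refine forall₂_congr fun i hi => ?_
  simp [sat_memF, Step, hi, show i < u.length by omega]

def pinMemF : FOf AB := all 0 (finAll fun p => imp (pinF p 0) (memF p 0))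

lemma sat_pinMemF : Sat u α pinMemF ↔ ∀ i < u.length, ∀ p, Pinned u i p → p ∈ u.getD i ∅ := by
  refine forall₂_congr fun i hi => ?_
  simp [sat_pinF, sat_memF, hi]

def pinUniqueF : FOf AB :=
  all 0 (finAll fun p => finAll fun q => imp (and (pinF p 0) (pinF q 0)) (ofProp (p = q)))

lemma sat_pinUniqueF :
    Sat u α pinUniqueF ↔ ∀ i < u.length, ∀ p q, Pinned u i p → Pinned u i q → p = q := by
  refine forall₂_congr fun i hi => ?_
  simp [sat_pinF, hi]

def flexRunF : FOf AB :=
  all 2 (all 3 (imp (succ 2 3 4) (imp (and (le 0 2) (le 3 1)) (flexF 2 3))))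

lemma sat_flexRunF (h1 : α 1 < u.length) : Sat u α flexRunF ↔ FlexRun u (α 0) (α 1) := by
  rw [flexRunF, sat_all_all_succ_imp (by decide) (by decide) (by decide)]
  simp only [sat_imp, Sat, update_apply, Nat.reduceEqDiff, if_true, if_false]
  refine ⟨fun h k hk hk' => ?_, fun h k hk h0 => ?_⟩
  · have := h k (by omega) ⟨hk, hk'⟩
    rwa [sat_flexF (by simp; omega) (by simp; omega)] at this
  · rw [sat_flexF (by simp; omega) (by simp; omega)]
    simpa [FlexAt] using h k h0.1 h0.2

def relF : FOf AB :=
  all 0 (all 1 (imp (and (lt 0 1) flexRunF) (finAll fun p => finAll fun q => finAll fun m =>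
    finAll fun n => imp (and (pinF p 0) (and (letter {m}ᶜ 0) (and (pinF q 1) (letter {n}ᶜ 1))))
      (ofProp (q - p = n - m)))))

lemma sat_relF : Sat u α relF ↔ ∀ i j, i < j → j < u.length → FlexRun u i j →
    ∀ p q m n, Pinned u i p → Pinned u j q → u.getD i ∅ = {m}ᶜ → u.getD j ∅ = {n}ᶜ →
      q - p = n - m := by
  simp +contextual only [relF, sat_all, sat_imp, sat_finAll, sat_ofProp, Sat,
    sat_pinF, sat_flexRunF, update_self, update_of_ne, ne_eq, zero_ne_one, not_false_eq_true,
    getElem?_eq_some_iff_getD, true_and]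
  exact ⟨fun h i j hij hj hrun p q m n hp hq hm hn =>
      h i (by omega) j hj ⟨hij, hrun⟩ p q m n ⟨hp, hm, hq, hn⟩,
    fun h i _ j hj ⟨hij, hrun⟩ p q m n ⟨hp, hm, hq, hn⟩ => h i j hij hj hrun p q m n hp hq hm hn⟩

def condF : FOf AB := and stepsF (and pinMemF (and pinUniqueF relF))

lemma sat_condF : Sat u α condF ↔ Cond u := by
  simp only [condF, sat_and, sat_stepsF, sat_pinMemF, sat_pinUniqueF, sat_relF, Cond]

end Word

open FOf in
def sentenceK : FOf AB := or (ex 0 (letter top3 0)) Word.condF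

lemma fv_sentenceK : sentenceK.fv = ∅ := by decide

theorem sat_sentenceK_iff {u : List AB} : FOf.Sat u (fun _ => 0) sentenceK ↔ u ∈ K := by
  have htop : FOf.Sat u (fun _ => 0) (FOf.ex 0 (FOf.letter top3 0)) ↔ top3 ∈ u := by
    simp [FOf.Sat, List.mem_iff_getElem, List.getElem?_eq_some_iff]
  by_cases h : top3 ∈ u
  · simp [sentenceK, htop, h, K]
  · simp [sentenceK, htop, h, K, Word.sat_condF, Word.cond_iff h, kblocks_iff]

/-- the minimal DFA of `K` (initial state `q_a`, accepting
states `q_a` and `q_⊤`) recognizes `K` and is counter-free: no word induces a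
non-trivial cycle on states. Consequently, `K` is FO-definable. -/
theorem K_dfa_counterFree_FO :
    (∀ u : List AB, u ∈ K ↔ (dfaRun St.qa u = St.qa ∨ dfaRun St.qa u = St.qtop)) ∧
    (¬ ∃ (u : List AB) (p q : St) (k : ℕ), 1 ≤ k ∧ p ≠ q ∧
        dfaRun p u = q ∧ dfaRun q (wpow u k) = p) ∧
    FODefinable K :=
  ⟨mem_K_iff, dfa_counterFree,
    sentenceK, fv_sentenceK, Set.ext fun _ => sat_sentenceK_iff.symm⟩
end

section
/- The language K = (↑a↑b↑c)* + A*⊤A* is not FO+-definable: for every n ∈ ℕ, letting N = 2^n, u = (abc)^N and v = (xyz)^{N-1}xy where x = {a,b}, y = {b,c}, z = {a,c}, we have u ∈ K, v ∉ K, and Duplicator wins the n-round EF+-game on (u,v). -/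
def lx : AB := {0, 1}
def ly : AB := {1, 2}
def lz : AB := {0, 2}

/- ---------------- auxiliary ---------------- -/

def uu (N : ℕ) : List AB := (List.replicate N [la, lb, lc]).flatten
def vv (N : ℕ) : List AB := (List.replicate (N - 1) [lx, ly, lz]).flatten ++ [lx, ly]

lemma flat_rep_len (l : List AB) (N : ℕ) :
    (List.replicate N l).flatten.length = N * l.length := by
  induction N with
  | zero => simp
  | succ n ih => simp [List.replicate_succ, ih]; ring

lemma uu_len (N : ℕ) : (uu N).length = 3 * N := by
  simp [uu, flat_rep_len]; ring

lemma vv_len (N : ℕ) (hN : 1 ≤ N) : (vv N).length = 3 * N - 1 := by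
  simp [vv, flat_rep_len]; omega

lemma flat_rep_get (l : List AB) (hl : l ≠ []) (N i : ℕ) (h : i < N * l.length) :
    (List.replicate N l).flatten[i]? = l[i % l.length]? := by
  induction N generalizing i with
  | zero => simp at h
  | succ n ih =>
      have hl0 : 0 < l.length := List.length_pos_iff.mpr hl
      rw [List.replicate_succ, List.flatten_cons]
      by_cases hi : i < l.length
      · rw [List.getElem?_append_left hi, Nat.mod_eq_of_lt hi]
      · push_neg at hi
        rw [Nat.succ_mul] at h
        rw [List.getElem?_append_right hi, ih (i - l.length) (by omega),
          Nat.mod_eq_sub_mod hi]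

lemma uu_get (N i : ℕ) (h : i < 3 * N) : (uu N)[i]? = [la, lb, lc][i % 3]? := by
  have := flat_rep_get [la, lb, lc] (by simp) N i (by simpa using by omega)
  simpa [uu] using this

lemma vv_ext (N : ℕ) (hN : 1 ≤ N) :
    vv N ++ [lz] = (List.replicate N [lx, ly, lz]).flatten := by
  obtain ⟨m, rfl⟩ : ∃ m, N = m + 1 := ⟨N - 1, by omega⟩
  rw [List.replicate_succ']
  simp [vv]

lemma vv_get (N j : ℕ) (hN : 1 ≤ N) (h : j < 3 * N - 1) :
    (vv N)[j]? = [lx, ly, lz][j % 3]? := by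
  have h1 : (vv N ++ [lz])[j]? = (vv N)[j]? :=
    List.getElem?_append_left (by rw [vv_len N hN]; omega)
  rw [← h1, vv_ext N hN]
  have := flat_rep_get [lx, ly, lz] (by simp) N j (by simpa using by omega)
  simpa using this

/- ---------------- membership ---------------- -/

lemma uu_mem_K (N : ℕ) : uu N ∈ K := by
  left
  induction N with
  | zero => exact KBlocks.nil
  | succ n ih =>
      rw [uu, List.replicate_succ, List.flatten_cons]
      exact KBlocks.cons (by decide) (by decide) (by decide) ih

lemma kblocks_len {w : List AB} (h : KBlocks w) : w.length % 3 = 0 := by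
  induction h with
  | nil => simp
  | cons _ _ _ _ ih => simp [ih]; omega

lemma vv_notMem_K (N : ℕ) (hN : 1 ≤ N) : vv N ∉ K := by
  rintro (h | h)
  · have := kblocks_len h
    rw [vv_len N hN] at this
    omega
  · simp only [vv, List.mem_append, List.mem_flatten] at h
    rcases h with ⟨l, hl, hm⟩ | h
    · rw [List.mem_replicate] at hl
      rw [hl.2] at hm
      exact absurd hm (by decide)
    · exact absurd h (by decide)

/- ---------------- the invariant ---------------- -/

def GInv (N k : ℕ) (m0 m1 : ℤ) (ts : List (ℕ × ℕ)) : Prop :=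
  -1 ≤ m0 ∧ m1 ≤ 3 * N ∧ m0 + 2 ^ k < m1 ∧
  ∀ p ∈ ts, p.1 < 3 * N ∧
    ((p.2 = p.1 ∧ (p.1 : ℤ) ≤ m0) ∨ (p.2 + 1 = p.1 ∧ m1 ≤ (p.1 : ℤ)))

lemma letter_le (i j : ℕ) (hij : j % 3 = i % 3 ∨ (j + 1) % 3 = i % 3) :
    ∃ a b : AB, [la, lb, lc][i % 3]? = some a ∧ [lx, ly, lz][j % 3]? = some b ∧ a ≤ b := by
  have hi : i % 3 = 0 ∨ i % 3 = 1 ∨ i % 3 = 2 := by omega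
  have hj : j % 3 = 0 ∨ j % 3 = 1 ∨ j % 3 = 2 := by omega
  rcases hi with hi | hi | hi <;> rcases hj with hj | hj | hj <;>
    rw [hi, hj] <;>
    first
      | omega
      | exact ⟨_, _, rfl, rfl, by decide⟩

lemma ginv_valid {N k : ℕ} {m0 m1 : ℤ} {ts : List (ℕ × ℕ)} (hN : 1 ≤ N)
    (h : GInv N k m0 m1 ts) : ValidPos (uu N) (vv N) ts := by
  obtain ⟨h0, h1, h2, h3⟩ := h
  have hg : (1 : ℤ) ≤ 2 ^ k := one_le_pow₀ one_le_two
  have hgap : m0 + 2 ≤ m1 := by linarith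
  constructor
  · intro p hp
    obtain ⟨hlt, hoff⟩ := h3 p hp
    have hj : p.2 < 3 * N - 1 := by rcases hoff with ⟨h4, h5⟩ | ⟨h4, h5⟩ <;> omega
    rw [uu_get N p.1 hlt, vv_get N p.2 hN hj]
    apply letter_le
    omega
  · intro p hp q hq
    obtain ⟨hpl, hpo⟩ := h3 p hp
    obtain ⟨hql, hqo⟩ := h3 q hq
    omega

lemma ginv_step {N k : ℕ} {m0 m1 m0' m1' : ℤ} {ts : List (ℕ × ℕ)} {i j : ℕ}
    (h : GInv N (k + 1) m0 m1 ts)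
    (hm0 : m0 ≤ m0') (hm1 : m1' ≤ m1) (hm1N : m1' ≤ 3 * N) (hm0' : -1 ≤ m0')
    (hgap : m0' + 2 ^ k < m1') (hi : i < 3 * N)
    (hij : (j = i ∧ (i : ℤ) ≤ m0') ∨ (j + 1 = i ∧ m1' ≤ (i : ℤ))) :
    GInv N k m0' m1' ((i, j) :: ts) := by
  obtain ⟨h0, h1, h2, h3⟩ := h
  refine ⟨hm0', hm1N, hgap, ?_⟩
  rintro p hp
  rcases List.mem_cons.mp hp with rfl | hp
  · exact ⟨hi, hij⟩
  · obtain ⟨ha, hb⟩ := h3 p hp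
    refine ⟨ha, ?_⟩
    omega

lemma ginv_dwin {N : ℕ} (hN : 1 ≤ N) :
    ∀ (k : ℕ) (m0 m1 : ℤ) (ts : List (ℕ × ℕ)),
      GInv N k m0 m1 ts → DWin (uu N) (vv N) k ts := by
  intro k
  induction k with
  | zero => intro m0 m1 ts h; exact ginv_valid hN h
  | succ k ih =>
      intro m0 m1 ts h
      have hg : (1 : ℤ) ≤ 2 ^ k := one_le_pow₀ one_le_two
      have hgap2 : m0 + 2 ^ k + 2 ^ k < m1 := by
        have := h.2.2.1
        rw [pow_succ] at this
        linarith
      have hm0 : -1 ≤ m0 := h.1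
      have hm1 : m1 ≤ 3 * N := h.2.1
      refine ⟨ginv_valid hN h, ?_, ?_⟩
      · -- Spoiler plays i in u
        intro i hiu
        rw [uu_len] at hiu
        by_cases hA : (i : ℤ) ≤ m0
        · refine ⟨i, ?_, ih m0 m1 _ (ginv_step h le_rfl le_rfl hm1 hm0 (by linarith) hiu (Or.inl ⟨rfl, hA⟩))⟩
          have : (i : ℤ) < 3 * N - 1 := by linarith
          rw [vv_len N hN]; omega
        · by_cases hB : m1 ≤ (i : ℤ)
          · refine ⟨i - 1, ?_, ?_⟩
            · rw [vv_len N hN]; omega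
            · have : i - 1 + 1 = i := by omega
              exact ih m0 m1 _ (ginv_step h le_rfl le_rfl hm1 hm0 (by linarith) hiu (Or.inr ⟨this, hB⟩))
          · push_neg at hA hB
            by_cases hC : m0 + 2 ^ k < (i : ℤ)
            · -- play offset -1, new m1' = i
              refine ⟨i - 1, ?_, ?_⟩
              · rw [vv_len N hN]; omega
              · have h1 : i - 1 + 1 = i := by omega
                exact ih m0 i _ (ginv_step h le_rfl (by linarith) (by omega) hm0 hC hiu (Or.inr ⟨h1, le_rfl⟩))
            · -- play offset 0, new m0' = i
              push_neg at hC
              refine ⟨i, ?_, ?_⟩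
              · have : (i : ℤ) < 3 * N - 1 := by linarith
                rw [vv_len N hN]; omega
              · exact ih i m1 _ (ginv_step h (by linarith) le_rfl hm1 (by linarith) (by linarith) hiu (Or.inl ⟨rfl, le_rfl⟩))
      · -- Spoiler plays j in v
        intro j hjv
        rw [vv_len N hN] at hjv
        have hj3 : (j : ℤ) < 3 * N - 1 := by omega
        by_cases hA : (j : ℤ) ≤ m0
        · exact ⟨j, by rw [uu_len]; omega,
            ih m0 m1 _ (ginv_step h le_rfl le_rfl hm1 hm0 (by linarith) (by omega) (Or.inl ⟨rfl, hA⟩))⟩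
        · by_cases hB : m1 ≤ (j : ℤ) + 1
          · refine ⟨j + 1, by rw [uu_len]; omega, ?_⟩
            exact ih m0 m1 _ (ginv_step h le_rfl le_rfl hm1 hm0 (by linarith) (by omega) (Or.inr ⟨rfl, by push_cast; linarith⟩))
          · push_neg at hA hB
            by_cases hC : m0 + 2 ^ k < (j : ℤ) + 1
            · refine ⟨j + 1, by rw [uu_len]; omega, ?_⟩
              exact ih m0 (j + 1) _ (ginv_step h le_rfl (by linarith) (by omega) hm0 hC (by omega) (Or.inr ⟨rfl, by push_cast; exact le_rfl⟩))
            · push_neg at hC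
              refine ⟨j, by rw [uu_len]; omega, ?_⟩
              exact ih j m1 _ (ginv_step h (by linarith) le_rfl hm1 (by linarith) (by linarith) (by omega) (Or.inl ⟨rfl, le_rfl⟩))

/-- `K` is not FO⁺-definable: for every `n`, with `N = 2^n`,
`u = (abc)^N ∈ K`, `v = (xyz)^(N-1) x y ∉ K`, and Duplicator wins the
`n`-round EF⁺-game on `(u, v)`. -/
theorem K_not_FOp_witness (n : ℕ) :
    (List.replicate (2 ^ n) [la, lb, lc]).flatten ∈ K ∧
    (List.replicate (2 ^ n - 1) [lx, ly, lz]).flatten ++ [lx, ly] ∉ K ∧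
    EFpre n ((List.replicate (2 ^ n) [la, lb, lc]).flatten)
      ((List.replicate (2 ^ n - 1) [lx, ly, lz]).flatten ++ [lx, ly]) := by
  have hN : 1 ≤ 2 ^ n := Nat.one_le_two_pow
  refine ⟨uu_mem_K (2 ^ n), vv_notMem_K (2 ^ n) hN, ?_⟩
  have hg : (1 : ℤ) ≤ 2 ^ n := one_le_pow₀ one_le_two
  have hgap : (-1 : ℤ) + 2 ^ n < 3 * (2 ^ n : ℕ) := by push_cast; linarith
  exact ginv_dwin hN n (-1) (3 * (2 ^ n : ℕ)) []
    ⟨le_rfl, le_rfl, hgap, by simp⟩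
end

section
/- Spoiler wins the 1-integer game in 2 moves: for any u ∈ 1(0+1)*0 and v ∈ (⟨1,0⟩)*, Spoiler can play two positions in u (a position labelled 1 immediately followed by a position labelled 0) such that Duplicator cannot respond in v while respecting the neighbouring constraint. -/
/-- Validity of a position of the integer game: `u` is a word of integers,
`v` a word of pairs `⟨i, i-1⟩` (written `(i, i-1)`), `ts` the list of pairs of
matched token positions. It requires: order agreement of positions; a
`u`-token labelled `t` matched to a `v`-token labelled `⟨s+1, s⟩` satisfies
`t ∈ {s+1, s}`; neighbours are matched to neighbours; and consecutive
`v`-tokens labelled `⟨i, i-1⟩ ⟨j, j-1⟩` have matched `u`-labels `(i, j)` or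
`(i-1, j-1)`, not mixed. -/
def IVal (u : List ℕ) (v : List (ℕ × ℕ)) (ts : List (ℕ × ℕ)) : Prop :=
  (∀ p ∈ ts, p.1 < u.length ∧ p.2 < v.length) ∧
  (∀ p ∈ ts, ∀ q ∈ ts, (p.1 ≤ q.1 ↔ p.2 ≤ q.2)) ∧
  (∀ p ∈ ts, ∀ (a : ℕ) (s : ℕ × ℕ), u[p.1]? = some a → v[p.2]? = some s →
      a = s.1 ∨ a = s.2) ∧
  (∀ p ∈ ts, ∀ q ∈ ts, (q.1 = p.1 + 1 ↔ q.2 = p.2 + 1)) ∧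
  (∀ p ∈ ts, ∀ q ∈ ts, q.1 = p.1 + 1 → q.2 = p.2 + 1 →
      ∀ (a b : ℕ) (s t : ℕ × ℕ),
        u[p.1]? = some a → u[q.1]? = some b →
        v[p.2]? = some s → v[q.2]? = some t →
        (a = s.1 ∧ b = t.1) ∨ (a = s.2 ∧ b = t.2))

/-- Spoiler wins the integer game on `(u, v)` from position `ts` within `k`
rounds. -/
def SWin (u : List ℕ) (v : List (ℕ × ℕ)) : ℕ → List (ℕ × ℕ) → Prop
  | 0, ts => ¬ IVal u v ts
  | k + 1, ts => ¬ IVal u v ts ∨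
      (∃ i, i < u.length ∧ ∀ j, j < v.length → SWin u v k ((i, j) :: ts)) ∨
      (∃ j, j < v.length ∧ ∀ i, i < u.length → SWin u v k ((i, j) :: ts))

/-! A word over `{a, b}` running from `a` to `b` must contain the factor `a b`. Spoiler plays
such a factor `1 0` of `u`; every letter of `v` is `⟨1, 0⟩`, so the non-mixing condition would
force the labels of the factor to be `(1, 1)` or `(0, 0)`. -/

theorem List.exists_adjacent_of_forall_eq_or_eq {α : Type*} (a b : α) (w : List α)
    (hw : ∀ x ∈ w, x = a ∨ x = b) :
    ∃ i, (a :: w ++ [b])[i]? = some a ∧ (a :: w ++ [b])[i + 1]? = some b := by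
  induction w with
  | nil => exact ⟨0, rfl, rfl⟩
  | cons x w ih =>
    rcases hw x mem_cons_self with rfl | rfl
    · obtain ⟨i, ha, hb⟩ := ih fun y hy => hw y (mem_cons_of_mem _ hy)
      exact ⟨i + 1, by simpa using ha, by simpa using hb⟩
    · exact ⟨0, rfl, by simp⟩

theorem IVal.labels_of_adjacent {u : List ℕ} {v : List (ℕ × ℕ)} {i j j' a b : ℕ}
    {s t : ℕ × ℕ} (h : IVal u v [(i, j), (i + 1, j')]) (ha : u[i]? = some a)
    (hb : u[i + 1]? = some b) (hs : v[j]? = some s) (ht : v[j']? = some t) :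
    (a = s.1 ∧ b = t.1) ∨ (a = s.2 ∧ b = t.2) := by
  obtain ⟨-, -, -, hnbr, hmix⟩ := h
  have hj' : j' = j + 1 := (hnbr (i, j) (by simp) (i + 1, j') (by simp)).mp rfl
  exact hmix (i, j) (by simp) (i + 1, j') (by simp) rfl hj' a b s t ha hb hs ht

/-- Spoiler wins the 1-integer game in 2 moves: for any
`u ∈ 1(0+1)*0` and `v ∈ ⟨1,0⟩*`, Spoiler can play two consecutive positions
in `u`, labelled `1` then `0`, such that Duplicator has no valid response
in `v`. -/
theorem spoiler_wins_one_integer_game (w : List ℕ) (hw : ∀ x ∈ w, x ≤ 1)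
    (v : List (ℕ × ℕ)) (hv : ∀ s ∈ v, s = (1, 0)) :
    ∃ i : ℕ, ((1 :: w ++ [0]) : List ℕ)[i]? = some 1 ∧
      (1 :: w ++ [0])[i + 1]? = some 0 ∧
      ∀ j j' : ℕ, j < v.length → j' < v.length →
        ¬ IVal (1 :: w ++ [0]) v [(i, j), (i + 1, j')] := by
  obtain ⟨i, h1, h0⟩ := List.exists_adjacent_of_forall_eq_or_eq 1 0 w fun x hx => by
    have := hw x hx
    omega
  refine ⟨i, h1, h0, fun j j' hj hj' hval => ?_⟩
  have hv' : ∀ k < v.length, v[k]? = some (1, 0) := fun k hk => by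
    rw [List.getElem?_eq_getElem hk, hv _ (List.getElem_mem hk)]
  simpa using hval.labels_of_adjacent h1 h0 (hv' j hj) (hv' j' hj')
end

section
/- In the setting of a deterministic Turing machine M whose states are partitioned into Q_1, Q_2, Q_3 with transitions cycling types 1→2→3→1, it is impossible to have three pairwise distinct configuration words u_1, u_2, u_3 ∈ C and a word v over the extended alphabet A with u_i ≤_A v for all i ∈ {1,2,3}. -/
/-- A deterministic Turing machine whose states are partitioned into three
types (via `typ : Q → Fin 3`) with transitions cycling `1 → 2 → 3 → 1`. -/
structure DTM where
  Γ : Type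
  Q : Type
  δ : Q → Γ → Option (Q × Γ × Bool)
  typ : Q → Fin 3
  cyc : ∀ q a q' b d, δ q a = some (q', b, d) → typ q' = typ q + 1

/-- A configuration: head position, state, tape content. -/
abbrev Config (M : DTM) := ℤ × M.Q × (ℤ → M.Γ)

/-- One step of the machine: the head writes a letter and moves by exactly
one cell (right if the direction bit is `true`, left otherwise). -/
def DTM.step (M : DTM) (c : Config M) : Option (Config M) :=
  (M.δ c.2.1 (c.2.2 c.1)).map fun x =>
    ((if x.2.2 then c.1 + 1 else c.1 - 1), x.1, Function.update c.2.2 c.1 x.2.1)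

/-- A step flips the parity of the head position. -/
lemma step_parity (M : DTM) (c c' : Config M) (h : M.step c = some c') :
    (c'.1 : ZMod 2) = (c.1 : ZMod 2) + 1 := by
  unfold DTM.step at h
  rcases hd : M.δ c.2.1 (c.2.2 c.1) with _ | x
  · rw [hd] at h; simp at h
  · rw [hd] at h
    simp only [Option.map_some, Option.some.injEq] at h
    subst h
    by_cases hb : x.2.2 <;> simp [hb] <;> push_cast <;> ring_nf
    · rw [show (-1 : ZMod 2) = 1 from by decide]

/-- in this setting, where `C` is the set of configuration
words (each `w ∈ C` encoding, via `encode`, a configuration of `M`) over the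
extended ordered alphabet (the order on words being `≤`), and where two
configuration words with a common upper bound are equal or encode consecutive
configurations, it is impossible to have three pairwise distinct
configuration words `u₁, u₂, u₃ ∈ C` and a word `w` with `uᵢ ≤ w` for all
`i`. -/
theorem no_three_below (M : DTM) (W : Type) [PartialOrder W]
    (C : Set W) (encode : W → Config M)
    (hsucc : ∀ u ∈ C, ∀ v ∈ C, (∃ w : W, u ≤ w ∧ v ≤ w) →
        u = v ∨ M.step (encode u) = some (encode v) ∨
          M.step (encode v) = some (encode u)) :
    ¬ ∃ u₁ u₂ u₃ : W, u₁ ∈ C ∧ u₂ ∈ C ∧ u₃ ∈ C ∧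
        u₁ ≠ u₂ ∧ u₁ ≠ u₃ ∧ u₂ ≠ u₃ ∧
        ∃ w : W, u₁ ≤ w ∧ u₂ ≤ w ∧ u₃ ≤ w := by
  rintro ⟨u₁, u₂, u₃, h₁, h₂, h₃, n₁₂, n₁₃, n₂₃, w, l₁, l₂, l₃⟩
  have key : ∀ u ∈ C, ∀ v ∈ C, u ≤ w → v ≤ w → u ≠ v →
      ((encode u).1 : ZMod 2) ≠ ((encode v).1 : ZMod 2) := by
    intro u hu v hv huw hvw hne
    rcases hsucc u hu v hv ⟨w, huw, hvw⟩ with h | h | h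
    · exact absurd h hne
    · rw [step_parity M _ _ h]; intro hc; simp at hc
    · rw [step_parity M _ _ h]; intro hc; simp at hc
  have p₁₂ := key u₁ h₁ u₂ h₂ l₁ l₂ n₁₂
  have p₁₃ := key u₁ h₁ u₃ h₃ l₁ l₃ n₁₃
  have p₂₃ := key u₂ h₂ u₃ h₃ l₂ l₃ n₂₃
  generalize ((encode u₁).1 : ZMod 2) = a at p₁₂ p₁₃
  generalize ((encode u₂).1 : ZMod 2) = b at p₁₂ p₂₃
  generalize ((encode u₃).1 : ZMod 2) = c at p₁₃ p₂₃
  revert p₁₂ p₁₃ p₂₃; revert a b c; decide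
end

section
/- If M is a deterministic Turing machine that is mortal with bound n, then for every configuration word u ∈ C: (i) 0 < h(u) < n; (ii) h(xuy) ≥ h(u) for all tape paddings x, y ∈ Γ*; (iii) if v ∈ C is the successor configuration of u then h(v) = h(u) − 1. -/
/-- A finite-tape configuration of a deterministic TM `(Γ, Q, δ)`:
`(l, q, r)` where `l` is the tape to the left of the head (closest cell
first), `q` the current state, and `r` the tape from the head onwards. -/
abbrev FCfg (Γ Q : Type) := List Γ × Q × List Γ

/-- One step of the machine on a finite-tape configuration; the machine
halts (`none`) when no transition applies or the head leaves the tape. -/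
def stepF {Γ Q : Type} (δ : Q → Γ → Option (Q × Γ × Bool)) :
    FCfg Γ Q → Option (FCfg Γ Q)
  | (l, q, r) =>
    match r with
    | [] => none
    | a :: r' =>
      match δ q a with
      | none => none
      | some (q', b, d) =>
        if d then some (b :: l, q', r')
        else
          match l with
          | [] => none
          | c :: l' => some (l', q', c :: b :: r')

/-- Iterating the machine `k` steps. -/
def iterF {Γ Q : Type} (δ : Q → Γ → Option (Q × Γ × Bool)) :
    ℕ → FCfg Γ Q → Option (FCfg Γ Q)
  | 0, c => some c
  | k + 1, c => (stepF δ c).bind (iterF δ k)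

/-- The height of a configuration: the length of the run of `M` starting
there (staying within the specified tape). -/
noncomputable def height {Γ Q : Type} (δ : Q → Γ → Option (Q × Γ × Bool))
    (c : FCfg Γ Q) : ℕ :=
  sSup {k | (iterF δ k c).isSome}

/-- Membership in `C`: configuration words encode configurations having both
a predecessor and a successor configuration. -/
def InC {Γ Q : Type} (δ : Q → Γ → Option (Q × Γ × Bool)) (c : FCfg Γ Q) : Prop :=
  (∃ p, stepF δ p = some c) ∧ (stepF δ c).isSome

section Aux
variable {Γ Q : Type} (δ : Q → Γ → Option (Q × Γ × Bool))

lemma stepF_pad (x y : List Γ) {c c' : FCfg Γ Q} (h : stepF δ c = some c') :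
    stepF δ (c.1 ++ x, c.2.1, c.2.2 ++ y) =
      some (c'.1 ++ x, c'.2.1, c'.2.2 ++ y) := by
  obtain ⟨l, q, r⟩ := c
  cases r with
  | nil => simp [stepF] at h
  | cons a r' =>
    cases hd : δ q a with
    | none => simp [stepF, hd] at h
    | some t =>
      obtain ⟨q', b, d⟩ := t
      cases d with
      | true =>
        simp [stepF, hd] at h ⊢
        subst h; simp
      | false =>
        cases l with
        | nil => simp [stepF, hd] at h
        | cons cc l' =>
          simp [stepF, hd] at h ⊢
          subst h; simp

lemma iterF_pad (x y : List Γ) : ∀ (k : ℕ) {c c' : FCfg Γ Q},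
    iterF δ k c = some c' →
    iterF δ k (c.1 ++ x, c.2.1, c.2.2 ++ y) =
      some (c'.1 ++ x, c'.2.1, c'.2.2 ++ y) := by
  intro k
  induction k with
  | zero => intro c c' h; simp [iterF] at h ⊢; simp [h]
  | succ k ih =>
    intro c c' h
    rw [show (k+1) = k+1 from rfl] at *
    rw [iterF] at h ⊢
    cases hs : stepF δ c with
    | none => rw [hs] at h; simp at h
    | some d =>
      rw [hs] at h
      simp only [Option.bind_some] at h
      rw [stepF_pad δ x y hs]
      simpa using ih h

end Aux

/-- if `M` is mortal with bound `n` (every run from any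
configuration has length at most `n`), then for every configuration word
`u ∈ C`: (i) `0 < h(u) < n`; (ii) `h(xuy) ≥ h(u)` for all tape paddings
`x, y ∈ Γ*`; (iii) if `v` is the successor configuration of `u` then
`h(v) = h(u) - 1`. -/
theorem height_properties {Γ Q : Type} (δ : Q → Γ → Option (Q × Γ × Bool))
    (n : ℕ) (hmortal : ∀ (c : FCfg Γ Q) (k : ℕ), (iterF δ k c).isSome → k ≤ n)
    (u : FCfg Γ Q) (hu : InC δ u) :
    (0 < height δ u ∧ height δ u < n) ∧
    (∀ x y : List Γ, height δ u ≤ height δ (u.1 ++ x, u.2.1, u.2.2 ++ y)) ∧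
    (∀ v : FCfg Γ Q, stepF δ u = some v → height δ v = height δ u - 1) := by
  obtain ⟨⟨p, hp⟩, hs⟩ := hu
  obtain ⟨v0, hv0⟩ := Option.isSome_iff_exists.mp hs
  have hbdd : ∀ c : FCfg Γ Q, BddAbove {k | (iterF δ k c).isSome} :=
    fun c => ⟨n, fun k hk => hmortal c k hk⟩
  have hne : ∀ c : FCfg Γ Q, (0 : ℕ) ∈ {k | (iterF δ k c).isSome} := by
    intro c; simp [iterF]
  have hmem : ∀ c, (iterF δ (height δ c) c).isSome :=
    fun c => Nat.sSup_mem ⟨0, hne c⟩ (hbdd c)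
  have hle : ∀ (c : FCfg Γ Q) (k : ℕ), (iterF δ k c).isSome → k ≤ height δ c :=
    fun c k hk => le_csSup (hbdd c) hk
  have hone : (iterF δ 1 u).isSome := by
    simp [iterF, hv0]
  have hpos : 0 < height δ u := lt_of_lt_of_le one_pos (hle u 1 hone)
  refine ⟨⟨hpos, ?_⟩, ?_, ?_⟩
  · -- height u < n, via the predecessor p
    have hiter : (iterF δ (height δ u + 1) p).isSome := by
      rw [iterF, hp]
      simpa using hmem u
    have := hmortal p _ hiter
    omega
  · -- padding
    intro x y
    obtain ⟨w, hw⟩ := Option.isSome_iff_exists.mp (hmem u)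
    have := iterF_pad δ x y (height δ u) hw
    exact hle _ _ (by rw [this]; rfl)
  · -- successor
    intro v hv
    have hsub : height δ v ≤ height δ u - 1 := by
      refine csSup_le ⟨0, hne v⟩ (fun k hk => ?_)
      have hk' : (iterF δ (k + 1) u).isSome := by
        rw [iterF, hv]; simpa using hk
      have := hle u (k + 1) hk'
      omega
    have hsup : height δ u - 1 ≤ height δ v := by
      apply hle
      have h1 : (iterF δ (height δ u - 1 + 1) u).isSome := by
        rw [Nat.sub_add_cancel hpos]; exact hmem u
      rw [iterF, hv] at h1
      simpa using h1
    omega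
end
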